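/- Let E_1 ∈ ℱ_1, let E_2 ⊆ [0,1]×Ω be measurable and non-anticipative, let ε ∈ (0,1) and let μ ∈ 𝒬̄^E. Then μ^ε := (1−ε)·μ + ε·(δ_1 ⊗ μ^Ω) belongs to 𝒬̄^E, has the same Ω-marginal as μ, and is ε-modified. -/

import Mathlib

open MeasureTheory Set Filter Topology
open scoped ENNReal

noncomputable section

/-- `ℝ^d`. -/
abbrev Eucl (d : ℕ) : Type := EuclideanSpace ℝ (Fin d)

/-- A function indexed by a linearly ordered topological space is càdlàg if it is
right-continuous at every point and has left limits at every point. -/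
def Cadlag {α : Type*} [TopologicalSpace α] [LinearOrder α] {β : Type*} [TopologicalSpace β]
    (f : α → β) : Prop :=
  (∀ t : α, Tendsto f (𝓝[>] t) (𝓝 (f t))) ∧ (∀ t : α, ∃ L : β, Tendsto f (𝓝[<] t) (𝓝 L))

/-- The canonical path space `Ω`: càdlàg paths `ω : [0,1] → ℝ^d`. -/
def PathSpace (d : ℕ) : Type := {ω : unitInterval → Eucl d // Cadlag ω}

/-- The canonical filtration `ℱ_t := σ(X_s : s ≤ t)` on the path space. -/
def pathF (d : ℕ) (t : unitInterval) : MeasurableSpace (PathSpace d) :=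
  ⨆ s : unitInterval, ⨆ _ : s ≤ t, MeasurableSpace.comap (fun ω : PathSpace d => ω.1 s) inferInstance

/-- The σ-algebra `ℱ_1` on `Ω`. -/
instance instMSPathSpace (d : ℕ) : MeasurableSpace (PathSpace d) := pathF d 1

/-- Lebesgue measure `λ` on `[0,1]`. -/
def lebI : Measure unitInterval := (volume : Measure ℝ).comap Subtype.val

/-- `X` is a square-integrable martingale under `P` (w.r.t. the canonical filtration):
`E^P‖X_t‖² < ∞` for all `t` and `E^P[X_t | ℱ_s] = X_s` `P`-a.s. for all `s ≤ t`. -/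
def IsSqIntMart (d : ℕ) (P : Measure (PathSpace d)) : Prop :=
  (∀ t : unitInterval, Integrable (fun ω : PathSpace d => ‖ω.1 t‖ ^ 2) P) ∧
  (∀ s t : unitInterval, s ≤ t →
    (fun ω : PathSpace d => ω.1 s) =ᵐ[P] P[fun ω : PathSpace d => ω.1 t | pathF d s])

/-- `𝒬`: probability measures on `(Ω, ℱ_1)` under which `X` is a square-integrable martingale. -/
def QSet (d : ℕ) : Set (Measure (PathSpace d)) :=
  {P | IsProbabilityMeasure P ∧ IsSqIntMart d P}

lemma cadlag_stop {d : ℕ} (ω : PathSpace d) (t : unitInterval) :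
    Cadlag (fun s => ω.1 (min s t)) := by
  constructor
  · intro s
    rcases le_or_gt t s with h | h
    · have hev : ∀ᶠ s' in 𝓝[>] s, ω.1 (min s' t) = ω.1 (min s t) := by
        filter_upwards [self_mem_nhdsWithin] with s' hs'
        have h1 : min s' t = t := min_eq_right (le_of_lt (lt_of_le_of_lt h hs'))
        have h2 : min s t = t := min_eq_right h
        rw [h1, h2]
      exact Tendsto.congr' (by filter_upwards [hev] with a ha using ha.symm) tendsto_const_nhds
    · have hmem : Iio t ∈ 𝓝[>] s := nhdsWithin_le_nhds (Iio_mem_nhds h)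
      have hev : ∀ᶠ s' in 𝓝[>] s, ω.1 s' = ω.1 (min s' t) := by
        filter_upwards [hmem] with s' hs'
        rw [min_eq_left (le_of_lt hs')]
      have hmin : min s t = s := min_eq_left h.le
      refine Tendsto.congr' hev ?_
      show Tendsto (fun s' => ω.1 s') (𝓝[>] s) (𝓝 (ω.1 (min s t)))
      rw [hmin]
      exact ω.2.1 s
  · intro s
    rcases le_or_gt s t with h | h
    · obtain ⟨L, hL⟩ := ω.2.2 s
      refine ⟨L, ?_⟩
      have hev : ∀ᶠ s' in 𝓝[<] s, ω.1 s' = ω.1 (min s' t) := by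
        filter_upwards [self_mem_nhdsWithin] with s' hs'
        rw [min_eq_left (le_of_lt (lt_of_lt_of_le hs' h))]
      exact Tendsto.congr' hev hL
    · refine ⟨ω.1 t, ?_⟩
      have hmem : Ioi t ∈ 𝓝[<] s := nhdsWithin_le_nhds (Ioi_mem_nhds h)
      have hev : ∀ᶠ s' in 𝓝[<] s, ω.1 (min s' t) = ω.1 t := by
        filter_upwards [hmem] with s' hs'
        rw [min_eq_right (le_of_lt hs')]
      exact Tendsto.congr' (by filter_upwards [hev] with a ha using ha.symm) tendsto_const_nhds

/-- The stopped path `ω_{·∧t}`. -/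
def stopPath {d : ℕ} (ω : PathSpace d) (t : unitInterval) : PathSpace d :=
  ⟨fun s => ω.1 (min s t), cadlag_stop ω t⟩

/-- A set `E₂ ⊆ [0,1] × Ω` is non-anticipative if `(t,ω) ∈ E₂ ⇔ (t, ω_{·∧t}) ∈ E₂`. -/
def NonAnticipativeSet {d : ℕ} (E₂ : Set (unitInterval × PathSpace d)) : Prop :=
  ∀ p : unitInterval × PathSpace d, p ∈ E₂ ↔ (p.1, stopPath p.2 p.1) ∈ E₂

/-- A function `Z` on `[0,1] × Ω` is non-anticipative if `Z(t,ω) = Z(t, ω_{·∧t})`. -/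
def NonAnticipativeFun {d : ℕ} (Z : unitInterval × PathSpace d → ℝ) : Prop :=
  ∀ p : unitInterval × PathSpace d, Z p = Z (p.1, stopPath p.2 p.1)

/-- The enlarged space `Ω̄ := [0,1] × Ω`. -/
abbrev OmegaBar (d : ℕ) : Type := unitInterval × PathSpace d

/-- The enlarged filtration `ℱ̄_t := σ((θ,ω) ↦ θ∧t) ∨ σ((θ,ω) ↦ ω(s) : s ≤ t)`. -/
def barF (d : ℕ) (t : unitInterval) : MeasurableSpace (OmegaBar d) :=
  MeasurableSpace.comap (fun p : OmegaBar d => min p.1 t) inferInstance ⊔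
  ⨆ s : unitInterval, ⨆ _ : s ≤ t,
    MeasurableSpace.comap (fun p : OmegaBar d => p.2.1 s) inferInstance

/-- `(θ,ω) ↦ X_t(ω)` is a square-integrable martingale w.r.t. `(ℱ̄_t)` under `μ`. -/
def IsSqIntMartBar (d : ℕ) (μ : Measure (OmegaBar d)) : Prop :=
  (∀ t : unitInterval, Integrable (fun p : OmegaBar d => ‖p.2.1 t‖ ^ 2) μ) ∧
  (∀ s t : unitInterval, s ≤ t →
    (fun p : OmegaBar d => p.2.1 s) =ᵐ[μ] μ[fun p : OmegaBar d => p.2.1 t | barF d s])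

/-- `𝒬̄`: probability measures on `Ω̄` under which `X` is a square-integrable `ℱ̄`-martingale. -/
def QBar (d : ℕ) : Set (Measure (OmegaBar d)) :=
  {μ | IsProbabilityMeasure μ ∧ IsSqIntMartBar d μ}

/-- `𝒬^E`. -/
def QE (d : ℕ) (E₁ : Set (PathSpace d)) (E₂ : Set (unitInterval × PathSpace d)) :
    Set (Measure (PathSpace d)) :=
  {P | P ∈ QSet d ∧ P E₁ = 1 ∧ (lebI.prod P) E₂ = 1}

/-- `𝒬̄^E`. -/
def QEBar (d : ℕ) (E₁ : Set (PathSpace d)) (E₂ : Set (unitInterval × PathSpace d)) :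
    Set (Measure (OmegaBar d)) :=
  {μ | μ ∈ QBar d ∧ μ (univ ×ˢ E₁) = 1 ∧
    (lebI.prod μ) {q : unitInterval × OmegaBar d | (q.1, q.2.2) ∈ E₂} = 1}

/-- The augmented filtration `ℱ^P_t := ℱ_t ∨ σ(P-null sets of ℱ_1)`. -/
def augF (d : ℕ) (P : Measure (PathSpace d)) (t : unitInterval) :
    MeasurableSpace (PathSpace d) :=
  pathF d t ⊔ MeasurableSpace.generateFrom {N : Set (PathSpace d) | P N = 0}

/-- `τ` is a `[0,1]`-valued `𝔽^P`-stopping time. -/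
def IsStopTime (d : ℕ) (P : Measure (PathSpace d)) (τ : PathSpace d → unitInterval) : Prop :=
  ∀ t : unitInterval, MeasurableSet[augF d P t] {ω : PathSpace d | τ ω ≤ t}

/-- `Z : [0,1] × Ω → ℝ` is `𝔽`-progressively measurable: for each `t ∈ [0,1]` the restriction
of `Z` to `[0,t] × Ω` is `Borel([0,t]) ⊗ ℱ_t`-measurable. -/
def ProgMeas {d : ℕ} (Z : unitInterval × PathSpace d → ℝ) : Prop :=
  ∀ t : unitInterval,
    @Measurable ({s : unitInterval // s ≤ t} × PathSpace d) ℝ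
      (@Prod.instMeasurableSpace _ _ inferInstance (pathF d t)) _
      (fun q => Z (q.1.1, q.2))

/-- `ψ : [0,1] × Ω → ℝ` is `𝔽^P`-progressively measurable. -/
def ProgMeasAug {d : ℕ} (P : Measure (PathSpace d)) (ψ : unitInterval × PathSpace d → ℝ) : Prop :=
  ∀ t : unitInterval,
    @Measurable ({s : unitInterval // s ≤ t} × PathSpace d) ℝ
      (@Prod.instMeasurableSpace _ _ inferInstance (augF d P t)) _
      (fun q => ψ (q.1.1, q.2))

/-- The integral of `f` against `P` with values in `EReal` (allowed to be `±∞`). -/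
def intE {α : Type*} [MeasurableSpace α] (P : Measure α) (f : α → ℝ) : EReal :=
  ((∫⁻ a, ENNReal.ofReal (f a) ∂P : ℝ≥0∞) : EReal) -
    ((∫⁻ a, ENNReal.ofReal (-(f a)) ∂P : ℝ≥0∞) : EReal)

/-- `μ` is `ε`-modified: `μ({1}×Γ) ≥ ε·μ^Ω(Γ)` for all `Γ ∈ ℱ_1`. -/
def EpsModified {d : ℕ} (ε : ℝ) (μ : Measure (OmegaBar d)) : Prop :=
  ∀ Γ : Set (PathSpace d), MeasurableSet[pathF d 1] Γ →
    ENNReal.ofReal ε * (μ.map Prod.snd) Γ ≤ μ ({(1 : unitInterval)} ×ˢ Γ)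

/-!
Mixing with `δ₁ ⊗ μ^Ω` does not change the `Ω`-marginal, and `δ₁ ⊗ μ^Ω` is the image of `μ`
under `(θ, ω) ↦ (1, ω)`. This map fixes every coordinate `X_s` and sends `ℱ̄_t`-events to
`ℱ̄_t`-events (it only freezes the clock `θ ∧ t` at the constant `t`), so it transports the
martingale property of `X`, and the martingale property passes to convex combinations because
conditional expectations are characterised by their integrals over `ℱ̄_s`-events. The support
conditions `E₁`, `E₂` only involve `ω` and the Lebesgue time, so they are preserved as well.
-/

section CondExp

variable {α β E : Type*} [NormedAddCommGroup E] [NormedSpace ℝ E]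

theorem setIntegral_eq_of_ae_eq_condExp [CompleteSpace E] {m m₀ : MeasurableSpace α}
    {μ : Measure α} (hm : m ≤ m₀) [SigmaFinite (μ.trim hm)] {f g : α → E} (hg : Integrable g μ)
    (hfg : f =ᵐ[μ] μ[g | m]) {s : Set α} (hs : MeasurableSet[m] s) :
    ∫ x in s, f x ∂μ = ∫ x in s, g x ∂μ :=
  (setIntegral_congr_ae (hm s hs) (hfg.mono fun _ hx _ => hx)).trans
    (setIntegral_condExp hm hg hs)

theorem ae_eq_condExp_map [CompleteSpace E] {m' : MeasurableSpace α} {m : MeasurableSpace β}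
    [mα : MeasurableSpace α] [mβ : MeasurableSpace β]
    (hm' : m' ≤ mα) (hm : m ≤ mβ) {μ : Measure α} [IsFiniteMeasure μ] {φ : α → β}
    (hφ : Measurable φ) (hφm : MeasurableSpace.comap φ m ≤ m') {f g : β → E}
    (hf : StronglyMeasurable[m] f) (hg : Integrable g (μ.map φ))
    (hfg : f ∘ φ =ᵐ[μ] μ[g ∘ φ | m']) :
    f =ᵐ[μ.map φ] (μ.map φ)[g | m] := by
  have hf_int : Integrable f (μ.map φ) :=
    (integrable_map_measure (hf.mono hm).aestronglyMeasurable hφ.aemeasurable).mpr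
      (integrable_condExp.congr hfg.symm)
  refine ae_eq_condExp_of_forall_setIntegral_eq hm hg (fun s _ _ => hf_int.integrableOn)
    (fun s hs _ => ?_) hf.aestronglyMeasurable
  rw [setIntegral_map (hm s hs) hf_int.1 hφ.aemeasurable,
    setIntegral_map (hm s hs) hg.1 hφ.aemeasurable]
  exact setIntegral_eq_of_ae_eq_condExp hm' (hg.comp_measurable hφ) hfg (hφm _ ⟨s, hs, rfl⟩)

theorem setIntegral_smul_add_smul_measure [MeasurableSpace α] {μ ν : Measure α}
    {a b : ℝ≥0∞} (ha : a ≠ ∞) (hb : b ≠ ∞) {f : α → E} (hμ : Integrable f μ)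
    (hν : Integrable f ν) (s : Set α) :
    ∫ x in s, f x ∂(a • μ + b • ν) =
      a.toReal • ∫ x in s, f x ∂μ + b.toReal • ∫ x in s, f x ∂ν := by
  rw [Measure.restrict_add, Measure.restrict_smul, Measure.restrict_smul,
    integral_add_measure (hμ.integrableOn.smul_measure ha) (hν.integrableOn.smul_measure hb),
    integral_smul_measure, integral_smul_measure]

theorem ae_eq_condExp_smul_add_smul [CompleteSpace E] {m m₀ : MeasurableSpace α} (hm : m ≤ m₀)
    {μ ν : Measure α} [IsFiniteMeasure μ] [IsFiniteMeasure ν] {a b : ℝ≥0∞} (ha : a ≠ ∞)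
    (hb : b ≠ ∞) {f g : α → E} (hf : StronglyMeasurable[m] f) (hgμ : Integrable g μ)
    (hgν : Integrable g ν) (hfgμ : f =ᵐ[μ] μ[g | m]) (hfgν : f =ᵐ[ν] ν[g | m]) :
    f =ᵐ[a • μ + b • ν] (a • μ + b • ν)[g | m] := by
  have := μ.smul_finite ha
  have := ν.smul_finite hb
  have hfμ : Integrable f μ := integrable_condExp.congr hfgμ.symm
  have hfν : Integrable f ν := integrable_condExp.congr hfgν.symm
  refine ae_eq_condExp_of_forall_setIntegral_eq hm
    ((hgμ.smul_measure ha).add_measure (hgν.smul_measure hb))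
    (fun s _ _ => ((hfμ.smul_measure ha).add_measure (hfν.smul_measure hb)).integrableOn)
    (fun s hs _ => ?_) hf.aestronglyMeasurable
  rw [setIntegral_smul_add_smul_measure ha hb hfμ hfν,
    setIntegral_smul_add_smul_measure ha hb hgμ hgν,
    setIntegral_eq_of_ae_eq_condExp hm hgμ hfgμ hs,
    setIntegral_eq_of_ae_eq_condExp hm hgν hfgν hs]

end CondExp

namespace MeasureTheory.Measure

variable {α β : Type*} [MeasurableSpace α] [MeasurableSpace β]

theorem smul_add_smul_apply_eq_one {μ ν : Measure α} {a b : ℝ≥0∞} (hab : a + b = 1)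
    {s : Set α} (hμ : μ s = 1) (hν : ν s = 1) : (a • μ + b • ν) s = 1 := by
  simp only [Measure.add_apply, Measure.smul_apply, smul_eq_mul, hμ, hν, mul_one, hab]

theorem isProbabilityMeasure_smul_add_smul (μ ν : Measure α) [IsProbabilityMeasure μ]
    [IsProbabilityMeasure ν] {a b : ℝ≥0∞} (hab : a + b = 1) :
    IsProbabilityMeasure (a • μ + b • ν) :=
  ⟨smul_add_smul_apply_eq_one hab measure_univ measure_univ⟩

theorem map_apply_eq_one {μ : Measure α} [IsProbabilityMeasure μ] {f : α → β}
    (hf : AEMeasurable f μ) {s : Set β} (hs : μ (f ⁻¹' s) = 1) : μ.map f s = 1 :=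
  have := isProbabilityMeasure_map hf
  le_antisymm prob_le_one (hs ▸ le_map_apply hf s)

end MeasureTheory.Measure

instance : IsProbabilityMeasure lebI :=
  inferInstanceAs (IsProbabilityMeasure (volume : Measure unitInterval))

section EnlargedSpace

variable {d : ℕ}

theorem comap_eval_le_pathF {s t : unitInterval} (hst : s ≤ t) :
    MeasurableSpace.comap (fun ω : PathSpace d => ω.1 s) inferInstance ≤ pathF d t :=
  le_iSup₂ (f := fun u (_ : u ≤ t) =>
    MeasurableSpace.comap (fun ω : PathSpace d => ω.1 u) inferInstance) s hst

theorem measurable_eval (s : unitInterval) : Measurable fun ω : PathSpace d => ω.1 s :=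
  Measurable.of_comap_le (comap_eval_le_pathF unitInterval.le_one')

theorem comap_eval_le_barF {s t : unitInterval} (hst : s ≤ t) :
    MeasurableSpace.comap (fun p : OmegaBar d => p.2.1 s) inferInstance ≤ barF d t :=
  le_sup_of_le_right (le_iSup₂ (f := fun u (_ : u ≤ t) =>
    MeasurableSpace.comap (fun p : OmegaBar d => p.2.1 u) inferInstance) s hst)

theorem barF_le (t : unitInterval) :
    barF d t ≤ (inferInstance : MeasurableSpace (OmegaBar d)) :=
  sup_le (measurable_fst.min measurable_const).comap_le
    (iSup₂_le fun s _ => ((measurable_eval s).comp measurable_snd).comap_le)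

theorem stronglyMeasurable_eval_barF {s t : unitInterval} (hst : s ≤ t) :
    StronglyMeasurable[barF d t] fun p : OmegaBar d => p.2.1 s :=
  (Measurable.of_comap_le (comap_eval_le_barF hst)).stronglyMeasurable

def toTerminal (p : OmegaBar d) : OmegaBar d := (1, p.2)

theorem measurable_toTerminal : Measurable (toTerminal (d := d)) :=
  measurable_const.prodMk measurable_snd

theorem comap_toTerminal_barF_le (t : unitInterval) :
    MeasurableSpace.comap toTerminal (barF d t) ≤ barF d t := by
  rw [barF, MeasurableSpace.comap_sup, MeasurableSpace.comap_comp]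
  refine sup_le ?_ ?_
  · exact (measurable_const (a := min (1 : unitInterval) t)).comap_le.trans bot_le
  · simp_rw [MeasurableSpace.comap_iSup, MeasurableSpace.comap_comp]
    exact iSup₂_le fun s hst => comap_eval_le_barF hst

theorem dirac_one_prod_map_snd (μ : Measure (OmegaBar d)) [IsFiniteMeasure μ] :
    (Measure.dirac 1).prod (μ.map Prod.snd) = μ.map toTerminal := by
  rw [Measure.dirac_prod, Measure.map_map measurable_prodMk_left measurable_snd]
  rfl

end EnlargedSpace

namespace IsSqIntMartBar

variable {d : ℕ} {μ ν : Measure (OmegaBar d)}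

theorem integrable_eval [IsFiniteMeasure μ] (h : IsSqIntMartBar d μ) (t : unitInterval) :
    Integrable (fun p : OmegaBar d => p.2.1 t) μ :=
  have hX : AEStronglyMeasurable (fun p : OmegaBar d => p.2.1 t) μ :=
    ((measurable_eval t).comp measurable_snd).aestronglyMeasurable
  ((memLp_two_iff_integrable_sq_norm hX).mpr (h.1 t)).integrable one_le_two

theorem map_toTerminal [IsFiniteMeasure μ] (h : IsSqIntMartBar d μ) :
    IsSqIntMartBar d (μ.map toTerminal) := by
  have hX : ∀ t, Integrable (fun p : OmegaBar d => p.2.1 t) (μ.map toTerminal) := fun t =>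
    (integrable_map_measure ((measurable_eval t).comp measurable_snd).aestronglyMeasurable
      measurable_toTerminal.aemeasurable).mpr (h.integrable_eval t)
  refine ⟨fun t => ?_, fun s t hst => ?_⟩
  · exact (integrable_map_measure
      (((measurable_eval t).comp measurable_snd).norm.pow_const 2).aestronglyMeasurable
      measurable_toTerminal.aemeasurable).mpr (h.1 t)
  · exact ae_eq_condExp_map (barF_le s) (barF_le s) measurable_toTerminal
      (comap_toTerminal_barF_le s) (stronglyMeasurable_eval_barF le_rfl) (hX t) (h.2 s t hst)

theorem smul_add_smul [IsFiniteMeasure μ] [IsFiniteMeasure ν] {a b : ℝ≥0∞} (ha : a ≠ ∞)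
    (hb : b ≠ ∞) (hμ : IsSqIntMartBar d μ) (hν : IsSqIntMartBar d ν) :
    IsSqIntMartBar d (a • μ + b • ν) :=
  ⟨fun t => ((hμ.1 t).smul_measure ha).add_measure ((hν.1 t).smul_measure hb),
    fun s t hst => ae_eq_condExp_smul_add_smul (barF_le s) ha hb
      (stronglyMeasurable_eval_barF le_rfl) (hμ.integrable_eval t) (hν.integrable_eval t)
      (hμ.2 s t hst) (hν.2 s t hst)⟩

end IsSqIntMartBar

theorem epsModification_mem_QEBar_general (d : ℕ)
    (E₁ : Set (PathSpace d))
    (E₂ : Set (unitInterval × PathSpace d))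
    (ε : ℝ) (hε : ε ∈ Set.Ioo (0 : ℝ) 1)
    (μ : Measure (OmegaBar d)) (hμ : μ ∈ QEBar d E₁ E₂) :
    (ENNReal.ofReal (1 - ε) • μ +
        ENNReal.ofReal ε • ((Measure.dirac (1 : unitInterval)).prod (μ.map Prod.snd)))
      ∈ QEBar d E₁ E₂ ∧
    (ENNReal.ofReal (1 - ε) • μ +
        ENNReal.ofReal ε • ((Measure.dirac (1 : unitInterval)).prod (μ.map Prod.snd))).map Prod.snd
      = μ.map Prod.snd ∧
    EpsModified ε (ENNReal.ofReal (1 - ε) • μ +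
        ENNReal.ofReal ε • ((Measure.dirac (1 : unitInterval)).prod (μ.map Prod.snd))) := by
  obtain ⟨⟨hprob, hmart⟩, hE₁, hE₂⟩ := hμ
  have hab : ENNReal.ofReal (1 - ε) + ENNReal.ofReal ε = 1 := by
    rw [← ENNReal.ofReal_add (by linarith [hε.2]) hε.1.le, sub_add_cancel, ENNReal.ofReal_one]
  have := Measure.isProbabilityMeasure_map (μ := μ) measurable_toTerminal.aemeasurable
  have hterm := dirac_one_prod_map_snd μ
  set μ₁ := (Measure.dirac (1 : unitInterval)).prod (μ.map Prod.snd)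
  have hmarg : (ENNReal.ofReal (1 - ε) • μ + ENNReal.ofReal ε • μ₁).map Prod.snd
      = μ.map Prod.snd := by
    rw [Measure.map_add _ _ measurable_snd, Measure.map_smul, Measure.map_smul,
      Measure.map_snd_prod, measure_univ, one_smul, ← add_smul, hab, one_smul]
  refine ⟨⟨⟨?_, ?_⟩, ?_, ?_⟩, hmarg, fun Γ _ => ?_⟩
  · rw [hterm]
    exact Measure.isProbabilityMeasure_smul_add_smul _ _ hab
  · rw [hterm]
    exact hmart.smul_add_smul ENNReal.ofReal_ne_top ENNReal.ofReal_ne_top hmart.map_toTerminal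
  · rw [hterm]
    exact Measure.smul_add_smul_apply_eq_one hab hE₁
      (Measure.map_apply_eq_one measurable_toTerminal.aemeasurable hE₁)
  · rw [hterm, Measure.prod_add, Measure.prod_smul_right, Measure.prod_smul_right,
      ← Measure.map_id (μ := lebI), Measure.map_prod_map _ _ measurable_id measurable_toTerminal,
      Measure.map_id]
    exact Measure.smul_add_smul_apply_eq_one hab hE₂
      (Measure.map_apply_eq_one (measurable_id.prodMap measurable_toTerminal).aemeasurable hE₂)
  · rw [hmarg, Measure.add_apply, Measure.smul_apply (ENNReal.ofReal ε), smul_eq_mul,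
      Measure.prod_prod, Measure.dirac_apply_of_mem (mem_singleton 1), one_mul]
    exact le_add_self

/-- the `ε`-modification `μ^ε := (1−ε)·μ + ε·(δ₁ ⊗ μ^Ω)` of `μ ∈ 𝒬̄^E`
belongs to `𝒬̄^E`, has the same `Ω`-marginal as `μ`, and is `ε`-modified. -/
theorem epsModification_mem_QEBar (d : ℕ) (hd : 1 ≤ d)
    (E₁ : Set (PathSpace d)) (hE₁ : MeasurableSet[pathF d 1] E₁)
    (E₂ : Set (unitInterval × PathSpace d)) (hE₂ : MeasurableSet E₂)
    (hE₂na : NonAnticipativeSet E₂)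
    (ε : ℝ) (hε : ε ∈ Set.Ioo (0 : ℝ) 1)
    (μ : Measure (OmegaBar d)) (hμ : μ ∈ QEBar d E₁ E₂) :
    (ENNReal.ofReal (1 - ε) • μ +
        ENNReal.ofReal ε • ((Measure.dirac (1 : unitInterval)).prod (μ.map Prod.snd)))
      ∈ QEBar d E₁ E₂ ∧
    (ENNReal.ofReal (1 - ε) • μ +
        ENNReal.ofReal ε • ((Measure.dirac (1 : unitInterval)).prod (μ.map Prod.snd))).map Prod.snd
      = μ.map Prod.snd ∧
    EpsModified ε (ENNReal.ofReal (1 - ε) • μ +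
        ENNReal.ofReal ε • ((Measure.dirac (1 : unitInterval)).prod (μ.map Prod.snd))) :=
  epsModification_mem_QEBar_general d E₁ E₂ ε hε μ hμ
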